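/- For every word q, if q satisfies condition C3 (whenever q = u·R·v·R·w for a letter R, q is a factor of u·R·v·R·v·R·w), then q satisfies at least one of: (B2a) there exist natural numbers j, k and words u, v, w such that u·v·w is self-join-free and q is a factor of u^j·w·v^k; (B2b) there exist a natural number k and words u, v, w such that u·v·w is self-join-free and q is a factor of (u·v)^k·w·v; (B3) there exist a natural number k and words u, v, w such that u·v·w is self-join-free and q is a factor of u·w·(u·v)^k. Conversely, each of B2a, B2b, B3 implies C3. -/

import Mathlib

/-- k-fold concatenation of a word with itself. -/
def wpow {α : Type*} (w : List α) : ℕ → List α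
  | 0 => []
  | k + 1 => w ++ wpow w k

/-- Condition C3: whenever `q = u·R·v·R·w`, `q` is a factor of `u·R·v·R·v·R·w`. -/
def CondC3 {α : Type*} (q : List α) : Prop :=
  ∀ (u v w : List α) (R : α), q = u ++ [R] ++ v ++ [R] ++ w →
    q <:+: u ++ [R] ++ v ++ [R] ++ v ++ [R] ++ w

/-- B2a: `q` is a factor of `u^j·w·v^k` for some self-join-free `u·v·w`. -/
def CondB2a {α : Type*} (q : List α) : Prop :=
  ∃ (j k : ℕ) (u v w : List α), (u ++ v ++ w).Nodup ∧
    q <:+: wpow u j ++ w ++ wpow v k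

/-- B2b: `q` is a factor of `(u·v)^k·w·v` for some self-join-free `u·v·w`. -/
def CondB2b {α : Type*} (q : List α) : Prop :=
  ∃ (k : ℕ) (u v w : List α), (u ++ v ++ w).Nodup ∧
    q <:+: wpow (u ++ v) k ++ w ++ v

/-- B3: `q` is a factor of `u·w·(u·v)^k` for some self-join-free `u·v·w`. -/
def CondB3 {α : Type*} (q : List α) : Prop :=
  ∃ (k : ℕ) (u v w : List α), (u ++ v ++ w).Nodup ∧
    q <:+: u ++ w ++ wpow (u ++ v) k

/-!
Everything is read off pairs of equal letters. Write `q[a, b)` for the factor at positions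
`a ≤ t < b`. If `q[i] = q[j]` with `i < j`, repeating `q[i+1, j+1)` gives `q.pump i j`, and `q` is
a factor of it exactly when, for some offset `o ≤ j - i`, `q[0, j+1)` has period `o` and
`q[i+1, |q|)` has period `j - i - o`. So C3 says that every repeat of a letter at distance `Δ`
splits `Δ` into a period of `q` up to the second occurrence and a period of `q` after the first.

Converse: in `u^j w v^k` and in `(uv)^k w v`, with `uvw` self-join-free, a letter repeated at
distance `Δ` makes `q` up to the second occurrence, or `q` after the first one, `Δ`-periodic;
this passes to factors and gives C3 with `o = Δ` or `o = 0`. B3 is B2b for the reversed word,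
and C3 is invariant under reversal.

Forward: let `q[j]` be the first letter seen before, at `i`. Either C3 at `(i, j)` makes
`q[i, |q|)` periodic with the self-join-free period `q[i, j)` (B2a), or `i = 0`. Then `q` is
`j`-periodic up to a first break at `e`, and the letters from `e + j` on are fresh up to the first
repeat `q[c]`, last seen at `b`. C3 at `(b, c)` leaves no positive offset, so `q[b, |q|)` has
period `c - b`, and where `b` lies with respect to the window `q[e, e + j)`, together with the
length of `q`, decides between B2a, B2b and B3.
-/

section

variable {α : Type*}

open List

theorem wpow_eq_flatten_replicate (u : List α) (k : ℕ) : wpow u k = (replicate k u).flatten := by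
  induction k with
  | zero => rfl
  | succ k ih => simp [wpow, ih, replicate_succ]

theorem length_wpow (u : List α) (k : ℕ) : (wpow u k).length = k * u.length := by
  simp [wpow_eq_flatten_replicate, sum_replicate]

theorem reverse_wpow (u : List α) (k : ℕ) : (wpow u k).reverse = wpow u.reverse k := by
  simp [wpow_eq_flatten_replicate, reverse_flatten]

theorem getElem?_wpow {u : List α} {k i : ℕ} (h : i < k * u.length) :
    (wpow u k)[i]? = u[i % u.length]? := by
  induction k generalizing i with
  | zero => simp at h
  | succ k ih =>
    rw [wpow]
    rcases lt_or_ge i u.length with hi | hi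
    · rw [getElem?_append_left hi, Nat.mod_eq_of_lt hi]
    · rw [getElem?_append_right hi, ih (by rw [Nat.succ_mul] at h; omega),
        ← Nat.mod_eq_sub_mod hi]

theorem mem_of_mem_wpow {a : α} {u : List α} {k : ℕ} (h : a ∈ wpow u k) : a ∈ u := by
  rw [wpow_eq_flatten_replicate] at h
  obtain ⟨l, hl, hal⟩ := mem_flatten.1 h
  rwa [eq_of_mem_replicate hl] at hal

namespace List

theorem infix_iff_exists_getElem? {l₁ l₂ : List α} : l₁ <:+: l₂ ↔
    ∃ k, l₁.length + k ≤ l₂.length ∧ ∀ i < l₁.length, l₁[i]? = l₂[i + k]? := by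
  simp only [infix_iff_getElem?]
  refine exists_congr fun k => and_congr_right fun _ => forall_congr' fun i => ?_
  exact ⟨fun h hi => by rw [h hi, getElem?_eq_getElem hi],
    fun h hi => by rw [← h hi, getElem?_eq_getElem hi]⟩

theorem prefix_of_getElem? {l₁ l₂ : List α} (h : ∀ i < l₁.length, l₁[i]? = l₂[i]?) :
    l₁ <+: l₂ :=
  prefix_iff_getElem?.2 fun i hi => by rw [← h i hi, getElem?_eq_getElem hi]

theorem IsSuffix.infix_append_append {x y X Y : List α} (hx : x <:+ X) (hy : y <+: Y)
    (w : List α) :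
    x ++ w ++ y <:+: X ++ w ++ Y := by
  obtain ⟨s, rfl⟩ := hx
  obtain ⟨t, rfl⟩ := hy
  exact ⟨s, t, by simp⟩

theorem Disjoint.getElem?_ne {l₁ l₂ : List α} (h : l₁.Disjoint l₂) {i j : ℕ}
    (hi : i < l₁.length) : l₁[i]? ≠ l₂[j]? := by
  rw [getElem?_eq_getElem hi]
  exact fun heq => h (getElem_mem hi) (mem_of_getElem? heq.symm)

theorem Disjoint.wpow_left {u v : List α} (h : u.Disjoint v) (k : ℕ) : (wpow u k).Disjoint v :=
  fun _ ha hb => h (mem_of_mem_wpow ha) hb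

section append_append

variable {A w B : List α} {x : ℕ}

theorem getElem?_append_append_of_lt (hx : x < A.length) : (A ++ w ++ B)[x]? = A[x]? := by
  rw [getElem?_append_left (by simp only [length_append]; omega), getElem?_append_left hx]

theorem getElem?_append_append_of_le_of_lt (hx : A.length ≤ x) (hx' : x < A.length + w.length) :
    (A ++ w ++ B)[x]? = w[x - A.length]? := by
  rw [getElem?_append_left (by simp only [length_append]; omega), getElem?_append_right hx]

theorem getElem?_append_append_of_le (hx : A.length + w.length ≤ x) :
    (A ++ w ++ B)[x]? = B[x - (A.length + w.length)]? := by
  rw [getElem?_append_right (by simp only [length_append]; omega), length_append]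

end append_append

theorem length_extract {q : List α} {a b : ℕ} (hb : b ≤ q.length) :
    (q.extract a b).length = b - a := by
  simp only [extract_eq_take_drop, length_take, length_drop]
  omega

theorem getElem?_extract {q : List α} {a b i : ℕ} (hi : i < b - a) :
    (q.extract a b)[i]? = q[a + i]? := by
  simp [hi]

theorem extract_append_extract {q : List α} {a b c : ℕ} (hab : a ≤ b) (hbc : b ≤ c) :
    q.extract a b ++ q.extract b c = q.extract a c := by
  simp only [extract_eq_take_drop]
  rw [show c - a = (b - a) + (c - b) by omega, take_add, drop_drop, show a + (b - a) = b by omega]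

theorem nodup_extract_iff {q : List α} {a b : ℕ} (hb : b ≤ q.length) :
    (q.extract a b).Nodup ↔ ∀ x y, a ≤ x → x < y → y < b → q[x]? ≠ q[y]? := by
  rw [nodup_iff_getElem?_ne_getElem?]
  constructor
  · intro h x y hx hxy hy
    have := h (x - a) (y - a) (by omega) (by rw [length_extract hb]; omega)
    rwa [getElem?_extract (by omega), getElem?_extract (by omega),
      Nat.add_sub_cancel' hx, Nat.add_sub_cancel' (by omega)] at this
  · intro h x y hxy hy
    rw [length_extract hb] at hy
    rw [getElem?_extract (by omega), getElem?_extract (by omega)]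
    exact h _ _ le_self_add (by omega) (by omega)

theorem extract_eq_drop_extract {q : List α} {a a' b : ℕ} (ha : a ≤ a') :
    q.extract a' b = (q.extract a b).drop (a' - a) := by
  simp only [extract_eq_take_drop, drop_take, drop_drop]
  rw [Nat.add_sub_cancel' ha, show b - a - (a' - a) = b - a' by omega]

theorem extract_zero_append_extract (q : List α) {a : ℕ} :
    q.extract 0 a ++ q.extract a q.length = q := by
  rw [← drop_eq_extract]
  simp

theorem extract_zero_append_extract_append_extract (q : List α) {a b : ℕ} (hab : a ≤ b) :
    q.extract 0 a ++ q.extract a b ++ q.extract b q.length = q := by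
  rw [extract_append_extract (Nat.zero_le _) hab, extract_zero_append_extract]

def PeriodicOn (q : List α) (p a b : ℕ) : Prop :=
  ∀ t, a ≤ t → t + p < b → q[t]? = q[t + p]?

theorem periodicOn_zero (q : List α) (a b : ℕ) : q.PeriodicOn 0 a b := fun _ _ _ => rfl

namespace PeriodicOn

variable {q : List α} {p a b : ℕ}

theorem mono (h : q.PeriodicOn p a b) {a' b' : ℕ} (ha : a ≤ a') (hb : b' ≤ b) :
    q.PeriodicOn p a' b' :=
  fun t ht htb => h t (ha.trans ht) (by omega)

theorem getElem?_eq_of_modEq (h : q.PeriodicOn p a b) {x y : ℕ} (hx : a ≤ x) (hxy : x ≤ y)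
    (hy : y < b) (hmod : x ≡ y [MOD p]) : q[x]? = q[y]? := by
  obtain ⟨k, hk⟩ := (Nat.modEq_iff_dvd' hxy).1 hmod
  obtain rfl : y = x + p * k := by omega
  clear hxy hmod hk
  induction k with
  | zero => simp
  | succ k ih =>
    rw [Nat.mul_succ] at hy
    rw [ih (by omega), Nat.mul_succ, ← Nat.add_assoc]
    exact h _ (hx.trans le_self_add) (by omega)

theorem extract_add_eq (h : q.PeriodicOn p a b) (hb : b ≤ q.length) :
    q.extract (a + p) b = q.extract a (b - p) := by
  refine ext_getElem? fun i => ?_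
  rcases lt_or_ge i (b - (a + p)) with hi | hi
  · rw [getElem?_extract hi, getElem?_extract (by omega), h (a + i) le_self_add (by omega)]
    congr 1; omega
  · rw [getElem?_eq_none (by rw [length_extract hb]; omega),
      getElem?_eq_none (by rw [length_extract (by omega)]; omega)]

theorem extract_prefix_wpow (h : q.PeriodicOn p a b) (hb : b ≤ q.length) (hab : a + p ≤ b)
    {k : ℕ} (hk : b - a ≤ k * p) : q.extract a b <+: wpow (q.extract a (a + p)) k := by
  have hv : (q.extract a (a + p)).length = p := by rw [length_extract (by omega)]; omega
  refine prefix_of_getElem? fun i hi => ?_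
  rw [length_extract hb] at hi
  have hp : 0 < p := Nat.pos_of_ne_zero fun hp => by simp [hp] at hk; omega
  have := Nat.mod_lt i hp
  rw [getElem?_extract hi, getElem?_wpow (by rw [hv]; omega), hv,
    getElem?_extract (by omega)]
  exact (h.getElem?_eq_of_modEq (by omega) (by have := Nat.mod_le i p; omega) (by omega)
    ((Nat.mod_modEq i p).add_left a)).symm

theorem extract_suffix_wpow (h : q.PeriodicOn p a b) (hb : b ≤ q.length) (hab : a + p ≤ b)
    {k : ℕ} (hk : b - a ≤ k * p) : q.extract a b <:+ wpow (q.extract (b - p) b) k := by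
  have hv : (q.extract (b - p) b).length = p := by rw [length_extract hb]; omega
  refine suffix_iff_getElem?.2 ⟨by rw [length_wpow, hv, length_extract hb]; exact hk,
    fun i hi => ?_⟩
  rw [← getElem?_eq_getElem, length_wpow, hv]
  rw [length_extract hb] at hi ⊢
  have hp : 0 < p := Nat.pos_of_ne_zero fun hp => by simp [hp] at hk; omega
  set r := (i + k * p - (b - a)) % p
  have hr : r < p := Nat.mod_lt _ hp
  have hmod : b - p + r ≡ a + i [MOD p] := by
    refine ((Nat.mod_modEq _ p).add_left (b - p)).trans ?_
    unfold Nat.ModEq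
    rw [← Nat.add_mod_right, show b - p + (i + k * p - (b - a)) + p = a + i + k * p by omega,
      Nat.add_mul_mod_self_right]
  rw [getElem?_wpow (by rw [hv]; omega), hv, getElem?_extract (by omega), getElem?_extract hi]
  rcases le_total (b - p + r) (a + i) with hle | hle
  · exact h.getElem?_eq_of_modEq (by omega) hle (by omega) hmod
  · exact (h.getElem?_eq_of_modEq (by omega) hle (by omega) hmod.symm).symm

end PeriodicOn

def pump (q : List α) (i j : ℕ) : List α := q.take (j + 1) ++ q.drop (i + 1)

section pump

variable {q : List α} {i j : ℕ}

theorem length_pump (hij : i ≤ j) (hj : j < q.length) :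
    (q.pump i j).length = q.length + (j - i) := by
  simp only [pump, length_append, length_take, length_drop]
  omega

theorem getElem?_pump_of_le (hj : j < q.length) {m : ℕ} (hm : m ≤ j) :
    (q.pump i j)[m]? = q[m]? := by
  rw [pump, getElem?_append_left (by simp only [length_take]; omega),
    getElem?_take_of_lt (by omega)]

theorem getElem?_pump_of_lt (hij : i ≤ j) (hj : j < q.length) {m : ℕ} (hm : j < m) :
    (q.pump i j)[m]? = q[m - (j - i)]? := by
  rw [pump, getElem?_append_right (by simp only [length_take]; omega), getElem?_drop, length_take,
    Nat.min_eq_left (by omega)]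
  congr 1; omega

theorem infix_pump_iff (hij : i < j) (hj : j < q.length) :
    q <:+: q.pump i j ↔ ∃ o ≤ j - i,
      q.PeriodicOn o 0 (j + 1) ∧ q.PeriodicOn (j - i - o) (i + 1) q.length := by
  rw [infix_iff_exists_getElem?, length_pump hij.le hj]
  constructor
  · rintro ⟨o, hlen, hocc⟩
    refine ⟨o, by omega, fun t _ ht => ?_, fun t ht hlt => ?_⟩
    · rw [hocc t (by omega), getElem?_pump_of_le hj (by omega)]
    · rw [hocc _ hlt, getElem?_pump_of_lt hij.le hj (by omega)]
      congr 1; omega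
  · rintro ⟨o, ho, hleft, hright⟩
    refine ⟨o, by omega, fun t ht => ?_⟩
    rcases le_or_gt (t + o) j with hto | hto
    · rw [getElem?_pump_of_le hj hto, hleft t (Nat.zero_le _) (by omega)]
    · rw [getElem?_pump_of_lt hij.le hj hto, hright (t + o - (j - i)) (by omega) (by omega)]
      congr 1; omega

theorem pump_append (u v w : List α) (R : α) :
    (u ++ [R] ++ v ++ [R] ++ w).pump u.length (u.length + 1 + v.length) =
      u ++ [R] ++ v ++ [R] ++ v ++ [R] ++ w := by
  rw [pump, take_left' (by simp; omega)]
  simp [drop_append]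

theorem eq_append_of_getElem?_eq (hij : i < j) (hj : j < q.length) {R : α}
    (hi : q[i]? = some R) (hjR : q[j]? = some R) :
    q = q.take i ++ [R] ++ q.extract (i + 1) j ++ [R] ++ q.drop (j + 1) := by
  have hdrop : ∀ k (hk : k < q.length), q[k]? = some R → q.drop k = R :: q.drop (k + 1) := by
    intro k hk hkR
    rw [drop_eq_getElem_cons hk]
    congr
    simpa [getElem?_eq_getElem hk] using hkR
  have hmid : q.drop (i + 1) = q.extract (i + 1) j ++ q.drop j := by
    conv_lhs => rw [← take_append_drop (j - (i + 1)) (q.drop (i + 1))]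
    rw [drop_drop, show i + 1 + (j - (i + 1)) = j by omega, extract_eq_take_drop]
  calc q = q.take i ++ q.drop i := (take_append_drop i q).symm
    _ = _ := by rw [hdrop i (by omega) hi, hmid, hdrop j hj hjR]; simp

end pump

theorem condC3_iff_infix_pump {q : List α} : CondC3 q ↔
    ∀ i j, i < j → j < q.length → q[i]? = q[j]? → q <:+: q.pump i j := by
  constructor
  · intro h i j hij hj heq
    obtain ⟨R, hjR⟩ : ∃ R, q[j]? = some R := ⟨_, getElem?_eq_getElem hj⟩
    have hq := eq_append_of_getElem?_eq hij hj (heq.trans hjR) hjR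
    have hpump := pump_append (q.take i) (q.extract (i + 1) j) (q.drop (j + 1)) R
    rw [← hq, length_take, length_extract hj.le, Nat.min_eq_left (by omega),
      show i + 1 + (j - (i + 1)) = j by omega] at hpump
    rw [hpump]
    exact h _ _ _ R hq
  · rintro h u v w R rfl
    rw [← pump_append]
    have hR : ∀ l₁ l₂ : List α, (l₁ ++ [R] ++ l₂)[l₁.length]? = some R := by simp
    have h₁ := hR u (v ++ [R] ++ w)
    have h₂ := hR (u ++ [R] ++ v) w
    simp only [append_assoc, length_append, length_singleton] at h₁ h₂ h ⊢
    exact h _ _ (by omega) (by omega) (by rw [h₁, Nat.add_assoc, h₂])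

theorem condC3_iff_periodicOn {q : List α} : CondC3 q ↔
    ∀ i j, i < j → j < q.length → q[i]? = q[j]? → ∃ o ≤ j - i,
      q.PeriodicOn o 0 (j + 1) ∧ q.PeriodicOn (j - i - o) (i + 1) q.length := by
  rw [condC3_iff_infix_pump]
  constructor
  · exact fun h i j hij hj heq => (infix_pump_iff hij hj).1 (h i j hij hj heq)
  · exact fun h i j hij hj heq => (infix_pump_iff hij hj).2 (h i j hij hj heq)

def SidePeriodic (T : List α) : Prop :=
  ∀ r₁ r₂, r₁ < r₂ → r₂ < T.length → T[r₁]? = T[r₂]? →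
    T.PeriodicOn (r₂ - r₁) 0 (r₂ + 1) ∨ T.PeriodicOn (r₂ - r₁) (r₁ + 1) T.length

theorem SidePeriodic.condC3 {T : List α} (h : T.SidePeriodic) : CondC3 T :=
  condC3_iff_periodicOn.2 fun i j hij hj heq => (h i j hij hj heq).elim
    (fun hl => ⟨j - i, le_rfl, hl, by simpa using periodicOn_zero T (i + 1) T.length⟩)
    (fun hr => ⟨0, Nat.zero_le _, periodicOn_zero T 0 (j + 1), by simpa using hr⟩)

theorem SidePeriodic.of_infix {q T : List α} (h : T.SidePeriodic) (hq : q <:+: T) :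
    q.SidePeriodic := by
  obtain ⟨k, hlen, hocc⟩ := infix_iff_exists_getElem?.1 hq
  have transfer : ∀ {p a b}, b ≤ q.length → T.PeriodicOn p (a + k) (b + k) →
      q.PeriodicOn p a b :=
    fun hb hT t ht htb => by
      rw [hocc t (by omega), hocc (t + _) (by omega), hT (t + k) (by omega) (by omega),
        Nat.add_right_comm]
  intro r₁ r₂ h12 hr₂ heq
  have hT := h (r₁ + k) (r₂ + k) (by omega) (by omega)
    (by rw [← hocc _ (by omega), ← hocc _ hr₂, heq])
  rw [Nat.add_sub_add_right] at hT
  rcases hT with hl | hr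
  · exact .inl (transfer (by omega) (hl.mono (Nat.zero_le _) (by omega)))
  · exact .inr (transfer le_rfl (hr.mono (by omega) (by omega)))

def RepeatsArePeriods (A : List α) : Prop :=
  ∀ r₁ r₂, r₁ < r₂ → r₂ < A.length → A[r₁]? = A[r₂]? → A.PeriodicOn (r₂ - r₁) 0 A.length

theorem Nodup.repeatsArePeriods {A : List α} (h : A.Nodup) : A.RepeatsArePeriods :=
  fun _ _ h12 hr₂ heq => absurd ((getElem?_inj (by omega) h).1 heq) h12.ne

theorem sidePeriodic_append_append {A w B : List α} (hw : w.Nodup) (hAw : A.Disjoint w)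
    (hwB : w.Disjoint B) (hA : A.RepeatsArePeriods) (hB : B.RepeatsArePeriods)
    (hAB : ∀ r₁ r₂, r₁ < A.length → r₂ < B.length → A[r₁]? = B[r₂]? →
      (A ++ w ++ B).PeriodicOn (A.length + w.length + r₂ - r₁) (r₁ + 1) (A ++ w ++ B).length) :
    (A ++ w ++ B).SidePeriodic := by
  have hlen : (A ++ w ++ B).length = A.length + w.length + B.length := by simp [Nat.add_assoc]
  intro r₁ r₂ h12 hr₂ heq
  rw [hlen] at hr₂
  rcases lt_or_ge r₂ A.length with h₂A | h₂A
  · refine .inl fun t _ ht => ?_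
    rw [getElem?_append_append_of_lt (by omega), getElem?_append_append_of_lt (by omega)]
    rw [getElem?_append_append_of_lt (by omega), getElem?_append_append_of_lt h₂A] at heq
    exact hA r₁ r₂ h12 h₂A heq t (Nat.zero_le _) (by omega)
  rcases lt_or_ge r₂ (A.length + w.length) with h₂w | h₂B
  · exfalso
    rw [getElem?_append_append_of_le_of_lt h₂A h₂w] at heq
    rcases lt_or_ge r₁ A.length with h₁A | h₁w
    · exact hAw.getElem?_ne h₁A (by rwa [getElem?_append_append_of_lt h₁A] at heq)
    · rw [getElem?_append_append_of_le_of_lt h₁w (by omega)] at heq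
      have := (getElem?_inj (by omega) hw).1 heq
      omega
  rw [getElem?_append_append_of_le h₂B] at heq
  rcases lt_or_ge r₁ A.length with h₁A | h₁A
  · rw [getElem?_append_append_of_lt h₁A] at heq
    have := hAB r₁ _ h₁A (by omega) heq
    exact .inr (by convert this using 2; omega)
  rcases lt_or_ge r₁ (A.length + w.length) with h₁w | h₁B
  · rw [getElem?_append_append_of_le_of_lt h₁A h₁w] at heq
    exact absurd heq (hwB.getElem?_ne (by omega))
  · refine .inr fun t ht ht' => ?_
    rw [hlen] at ht'
    rw [getElem?_append_append_of_le h₁B] at heq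
    have := hB _ _ (by omega) (by omega) heq (t - (A.length + w.length)) (Nat.zero_le _)
      (by omega)
    rwa [getElem?_append_append_of_le (by omega), getElem?_append_append_of_le (by omega),
      show t + (r₂ - r₁) - (A.length + w.length) = t - (A.length + w.length) +
        (r₂ - (A.length + w.length) - (r₁ - (A.length + w.length))) by omega]

end List

theorem repeatsArePeriods_wpow {g : List α} (hg : g.Nodup) (K : ℕ) :
    (wpow g K).RepeatsArePeriods := by
  intro r₁ r₂ h12 hr₂ heq
  rw [length_wpow] at hr₂ ⊢
  have hpos : 0 < g.length := Nat.pos_of_ne_zero fun h => by simp [h] at hr₂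
  rw [getElem?_wpow (by omega), getElem?_wpow hr₂] at heq
  obtain ⟨c, hc⟩ := (Nat.modEq_iff_dvd' h12.le).1 ((getElem?_inj (Nat.mod_lt _ hpos) hg).1 heq)
  intro t _ ht
  rw [getElem?_wpow (by omega), getElem?_wpow ht, hc, Nat.add_mul_mod_self_left]

theorem sidePeriodic_b2a {u v w : List α} (hnd : (u ++ v ++ w).Nodup) (j k : ℕ) :
    (wpow u j ++ w ++ wpow v k).SidePeriodic := by
  rw [nodup_append', nodup_append', disjoint_append_left] at hnd
  obtain ⟨⟨hu, hv, huv⟩, hw, huw, hvw⟩ := hnd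
  refine sidePeriodic_append_append hw (huw.wpow_left j) (hvw.wpow_left k).symm
    (repeatsArePeriods_wpow hu j) (repeatsArePeriods_wpow hv k) fun r₁ r₂ h₁ _ heq => ?_
  exact absurd heq (((huv.wpow_left j).symm.wpow_left k).symm.getElem?_ne h₁)

theorem sidePeriodic_b2b {u v w : List α} (hnd : (u ++ v ++ w).Nodup) (k : ℕ) :
    (wpow (u ++ v) k ++ w ++ v).SidePeriodic := by
  rw [nodup_append', nodup_append', disjoint_append_left] at hnd
  obtain ⟨⟨hu, hv, huv⟩, hw, huw, hvw⟩ := hnd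
  have hg : (u ++ v).Nodup := nodup_append'.2 ⟨hu, hv, huv⟩
  refine sidePeriodic_append_append hw
    ((disjoint_append_left.2 ⟨huw, hvw⟩).wpow_left k) hvw.symm (repeatsArePeriods_wpow hg k)
    hv.repeatsArePeriods fun r₁ r₂ h₁ h₂ heq => ?_
  have hlenA : (wpow (u ++ v) k).length = k * (u ++ v).length := length_wpow _ _
  have hshift : ∀ x, (u ++ v)[u.length + x]? = v[x]? := fun x => by
    rw [getElem?_append_right (by omega), Nat.add_sub_cancel_left]
  rw [hlenA] at h₁ ⊢
  rw [getElem?_wpow h₁, ← hshift] at heq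
  generalize hG : (u ++ v).length = G at *
  have hGu : u.length + v.length = G := by rw [← hG, length_append]
  have hphase : r₁ % G = u.length + r₂ :=
    (getElem?_inj (by rw [hG]; exact Nat.mod_lt _ (by omega)) hg).1 heq
  have hdiv : G * (r₁ / G) + (u.length + r₂) = r₁ := by rw [← hphase, Nat.div_add_mod]
  have hblock : G * (r₁ / G) + G ≤ k * G := by
    rw [← Nat.mul_succ, Nat.mul_comm k]
    exact Nat.mul_le_mul_left _ (Nat.div_lt_of_lt_mul (by rwa [Nat.mul_comm]))
  intro t ht htlen
  simp only [length_append, hlenA] at htlen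
  generalize hN : k * G = N at *
  have hleft : (wpow (u ++ v) k ++ w ++ v)[t]? = v[r₂ + (t - r₁)]? := by
    have hmod := Nat.mul_add_mod G (r₁ / G) (u.length + (r₂ + (t - r₁)))
    rw [show G * (r₁ / G) + (u.length + (r₂ + (t - r₁))) = t by omega,
      Nat.mod_eq_of_lt (show u.length + (r₂ + (t - r₁)) < G by omega)] at hmod
    rw [append_assoc, getElem?_append_left (by rw [hlenA]; omega),
      getElem?_wpow (by rw [hG, hN]; omega), hG, hmod, hshift]
  rw [hleft, getElem?_append_right (by simp only [length_append, hlenA]; omega)]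
  simp only [length_append, hlenA]
  congr 1; omega

theorem condC3_of_reverse {q : List α} (h : CondC3 q.reverse) : CondC3 q := by
  rintro u v w R rfl
  have := h w.reverse v.reverse u.reverse R (by simp)
  rw [← reverse_infix]
  simpa using this

theorem CondB3.reverse {q : List α} (h : CondB3 q) : CondB2b q.reverse := by
  obtain ⟨k, u, v, w, hnd, hq⟩ := h
  refine ⟨k, v.reverse, u.reverse, w.reverse, ?_, ?_⟩
  · refine (Perm.nodup_iff ?_).1 hnd
    exact (perm_append_comm.trans ((reverse_perm v).symm.append (reverse_perm u).symm)).append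
      (reverse_perm w).symm
  · simpa [reverse_wpow] using reverse_infix.2 hq

theorem CondB2a.condC3 {q : List α} (h : CondB2a q) : CondC3 q :=
  let ⟨j, k, _, _, _, hnd, hq⟩ := h
  ((sidePeriodic_b2a hnd j k).of_infix hq).condC3

theorem CondB2b.condC3 {q : List α} (h : CondB2b q) : CondC3 q :=
  let ⟨k, _, _, _, hnd, hq⟩ := h
  ((sidePeriodic_b2b hnd k).of_infix hq).condC3

theorem CondB3.condC3 {q : List α} (h : CondB3 q) : CondC3 q :=
  condC3_of_reverse h.reverse.condC3

theorem condB2a_of_periodicOn {q : List α} {a p : ℕ} (hp : 0 < p) (hap : a + p ≤ q.length)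
    (hper : q.PeriodicOn p a q.length) (hnd : (q.extract 0 (a + p)).Nodup) : CondB2a q := by
  refine ⟨0, q.length, [], q.extract a (a + p), q.extract 0 a, ?_, ?_⟩
  · rwa [nil_append, nodup_append_comm, extract_append_extract (Nat.zero_le _) (by omega)]
  · have hpre := hper.extract_prefix_wpow le_rfl hap (k := q.length)
      (by have := Nat.le_mul_of_pos_right q.length hp; omega)
    have := ((prefix_append_right_inj (q.extract 0 a)).2 hpre).isInfix
    rwa [extract_zero_append_extract] at this

theorem condB2a_of_periodicOn_of_periodicOn {q : List α} {d e m D : ℕ} (hd : 0 < d)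
    (hD : 0 < D) (hpre : q.PeriodicOn d 0 (e + d)) (hm : e + d ≤ m) (hmD : m + D ≤ q.length)
    (htail : q.PeriodicOn D m q.length) (hnd : (q.extract e (m + D)).Nodup) : CondB2a q := by
  refine ⟨q.length, q.length, q.extract e (e + d), q.extract m (m + D), q.extract (e + d) m,
    ?_, ?_⟩
  · have hperm : (q.extract e (e + d) ++ q.extract m (m + D) ++ q.extract (e + d) m).Perm
        (q.extract e (e + d) ++ q.extract (e + d) m ++ q.extract m (m + D)) := by
      simpa only [append_assoc] using perm_append_comm.append_left _
    rwa [hperm.nodup_iff, extract_append_extract (by omega) hm,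
      extract_append_extract (by omega) (by omega)]
  · have hx := hpre.extract_suffix_wpow (by omega) (by omega) (k := q.length)
      (by have := Nat.le_mul_of_pos_right q.length hd; omega)
    rw [Nat.add_sub_cancel] at hx
    have hy := htail.extract_prefix_wpow le_rfl hmD (k := q.length)
      (by have := Nat.le_mul_of_pos_right q.length hD; omega)
    have := hx.infix_append_append hy (q.extract (e + d) m)
    rwa [extract_zero_append_extract_append_extract q hm] at this

theorem condB2b_of_periodicOn {q : List α} {d e b c : ℕ} (hd : 0 < d)
    (hpre : q.PeriodicOn d 0 (e + d)) (heb : e ≤ b) (hbed : b ≤ e + d) (hedc : e + d ≤ c)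
    (hc : c ≤ q.length) (htail : q.PeriodicOn (c - b) b q.length)
    (hshort : q.length ≤ c + (e + d - b)) (hnd : (q.extract e c).Nodup) : CondB2b q := by
  refine ⟨q.length, q.extract e b, q.extract b (e + d), q.extract (e + d) c, ?_, ?_⟩
  · rwa [extract_append_extract heb hbed, extract_append_extract (by omega) hedc]
  · have hx := hpre.extract_suffix_wpow (by omega) (by omega) (k := q.length)
      (by have := Nat.le_mul_of_pos_right q.length hd; omega)
    rw [Nat.add_sub_cancel, ← extract_append_extract heb hbed] at hx
    have hy : q.extract c q.length <+: q.extract b (e + d) := by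
      have := htail.extract_add_eq le_rfl
      rw [Nat.add_sub_cancel' (by omega : b ≤ c)] at this
      rw [this]
      exact take_prefix_take_left (by omega)
    have := hx.infix_append_append hy (q.extract (e + d) c)
    rwa [extract_zero_append_extract_append_extract q hedc] at this

theorem condB3_of_periodicOn {q : List α} {d e b c : ℕ} (hpre : q.PeriodicOn d 0 (e + d))
    (heb : e ≤ b) (hbd : b ≤ d) (hedc : e + d ≤ c) (hc : c ≤ q.length) (hbc : b < c)
    (htail : q.PeriodicOn (c - b) b q.length) (hnd : (q.extract e c).Nodup) : CondB3 q := by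
  refine ⟨q.length, q.extract b (e + d), q.extract (e + d) c, q.extract e b, ?_, ?_⟩
  · rwa [perm_append_comm.nodup_iff, extract_append_extract (by omega) hedc,
      extract_append_extract heb (by omega)]
  · have hx : q.extract 0 e <:+ q.extract b (e + d) := by
      have := hpre.extract_add_eq (by omega)
      rw [Nat.zero_add, Nat.add_sub_cancel] at this
      rw [← this, extract_eq_drop_extract hbd]
      exact drop_suffix _ _
    have hy := htail.extract_prefix_wpow le_rfl (by omega) (k := q.length)
      (by have := Nat.le_mul_of_pos_right q.length (show 0 < c - b by omega); omega)
    rw [Nat.add_sub_cancel' hbc.le, ← extract_append_extract (by omega : b ≤ e + d) hedc] at hy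
    have := hx.infix_append_append hy (q.extract e b)
    rwa [extract_zero_append_extract_append_extract q heb] at this

abbrev CondB (q : List α) : Prop := CondB2a q ∨ CondB2b q ∨ CondB3 q

theorem Nat.exists_least {p : ℕ → Prop} (h : ∃ n, p n) : ∃ n, p n ∧ ∀ m < n, ¬ p m := by
  classical
  exact ⟨Nat.find h, Nat.find_spec h, fun _ => Nat.find_min h⟩

section Forward

variable {q : List α} {d e : ℕ}

theorem getElem?_ne_of_lt_period (hd : 0 < d) (hdist : ∀ x y, x < y → y < d → q[x]? ≠ q[y]?)
    (hpre : q.PeriodicOn d 0 (e + d)) {x y : ℕ} (hxy : x < y) (hyx : y < x + d)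
    (hy : y < e + d) : q[x]? ≠ q[y]? := by
  have hx' := hpre.getElem?_eq_of_modEq (Nat.zero_le _) (Nat.mod_le x d) (by omega)
    (Nat.mod_modEq x d)
  have hy' := hpre.getElem?_eq_of_modEq (Nat.zero_le _) (Nat.mod_le y d) hy (Nat.mod_modEq y d)
  have hne : x % d ≠ y % d := fun h => by
    have := Nat.le_of_dvd (by omega) ((Nat.modEq_iff_dvd' hxy.le).1 h)
    omega
  rw [← hx', ← hy']
  rcases lt_or_gt_of_ne hne with h | h
  · exact hdist _ _ h (Nat.mod_lt _ hd)
  · exact (hdist _ _ h (Nat.mod_lt _ hd)).symm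

theorem period_eq_zero_of_break (hd : 0 < d) (hdist : ∀ x y, x < y → y < d → q[x]? ≠ q[y]?)
    (hpre : q.PeriodicOn d 0 (e + d)) (hbreak : q[e]? ≠ q[e + d]?) {c o : ℕ}
    (hfresh : ∀ x y, x < y → e + d ≤ y → y < c → q[x]? ≠ q[y]?) (hedc : e + d ≤ c)
    (ho : q.PeriodicOn o 0 (c + 1)) (hoc : o < c) : o = 0 := by
  by_contra ho0
  have h0 : q[0]? = q[o]? := by simpa using ho 0 le_rfl (by omega)
  rcases lt_or_ge o (e + d) with hsmall | hlarge
  -- a period shorter than `e + d` is a multiple of `d`, and then carries `q[e]` to `q[e + d]`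
  · have hdvd : d ∣ o := by
      refine Nat.dvd_of_mod_eq_zero (by_contra fun hmod => hdist 0 (o % d) (by omega)
        (Nat.mod_lt _ hd) (h0.trans ?_))
      exact (hpre.getElem?_eq_of_modEq (Nat.zero_le _) (Nat.mod_le o d) hsmall
        (Nat.mod_modEq o d)).symm
    have hdo := Nat.le_of_dvd (by omega) hdvd
    have h1 : q[e + d - o]? = q[e + d]? := by
      simpa [Nat.sub_add_cancel (show o ≤ e + d by omega)] using
        ho (e + d - o) (Nat.zero_le _) (by omega)
    have h2 : q[e + d - o]? = q[e]? := hpre.getElem?_eq_of_modEq (Nat.zero_le _) (by omega)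
      (by omega) ((Nat.modEq_iff_dvd' (by omega)).2
        (by rw [show e - (e + d - o) = o - d by omega]; exact Nat.dvd_sub hdvd dvd_rfl))
    exact hbreak (h2.symm.trans h1)
  · exact hfresh 0 o (by omega) hlarge hoc h0

theorem CondC3.condB_of_fresh_repeat (hC3 : CondC3 q) (hd : 0 < d)
    (hdist : ∀ x y, x < y → y < d → q[x]? ≠ q[y]?) (hpre : q.PeriodicOn d 0 (e + d)) (he : 0 < e)
    (hbreak : q[e]? ≠ q[e + d]?) {b c : ℕ} (hedc : e + d ≤ c) (hcn : c < q.length)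
    (hfresh : ∀ x y, x < y → e + d ≤ y → y < c → q[x]? ≠ q[y]?) (hbc : b < c)
    (hqb : q[b]? = q[c]?) (hlast : ∀ x, b < x → x < c → q[x]? ≠ q[c]?) :
    CondB q := by
  have hzero : ∀ {o}, q.PeriodicOn o 0 (c + 1) → o < c → o = 0 :=
    period_eq_zero_of_break hd hdist hpre hbreak hfresh hedc
  have heb : e ≤ b := by
    by_contra! hbe
    exact hlast (b + d) (by omega) (by omega)
      ((hpre b (Nat.zero_le _) (by omega)).symm.trans hqb)
  have hnd : (q.extract e c).Nodup := (nodup_extract_iff hcn.le).2 fun x y _ hxy hyc => by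
    rcases lt_or_ge y (e + d) with hy | hy
    · exact getElem?_ne_of_lt_period hd hdist hpre hxy (by omega) hy
    · exact hfresh x y hxy hy hyc
  have htail : q.PeriodicOn (c - b) b q.length := by
    obtain ⟨o, ho, hl, hr⟩ := condC3_iff_periodicOn.1 hC3 b c hbc hcn hqb
    obtain rfl := hzero hl (by omega)
    intro t hbt ht
    rcases hbt.eq_or_lt with rfl | hbt
    · rwa [Nat.add_sub_cancel' hbc.le]
    · simpa using hr t hbt (by simpa using ht)
  rcases le_or_gt (e + d) b with hedb | hbed
  · exact .inl (condB2a_of_periodicOn_of_periodicOn hd (by omega) hpre hedb (by omega) htail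
      (by rwa [Nat.add_sub_cancel' hbc.le]))
  rcases le_or_gt q.length (c + (e + d - b)) with hshort | hlong
  · exact .inr (.inl (condB2b_of_periodicOn hd hpre heb hbed.le hedc hcn.le htail hshort hnd))
  refine .inr (.inr (condB3_of_periodicOn hpre heb ?_ hedc hcn.le hbc htail hnd))
  -- otherwise the repeat `q[b - d] = q[c]` would carry the letter at `e` over to `e + d`
  by_contra! hdb
  have hq' : q[b - d]? = q[c]? := by
    rw [hpre (b - d) (Nat.zero_le _) (by omega), Nat.sub_add_cancel hdb.le, hqb]
  obtain ⟨o, ho, hl, hr⟩ := condC3_iff_periodicOn.1 hC3 (b - d) c (by omega) hcn hq'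
  obtain rfl := hzero hl (by omega)
  have h1 := hr e (by omega) (by omega)
  have h2 := htail (e + d) (by omega) (by omega)
  rw [show e + (c - (b - d) - 0) = e + d + (c - b) by omega] at h1
  exact hbreak (h1.trans h2.symm)

theorem CondC3.condB_of_break (hC3 : CondC3 q) (hd : 0 < d)
    (hdist : ∀ x y, x < y → y < d → q[x]? ≠ q[y]?) (hpre : q.PeriodicOn d 0 (e + d)) (he : 0 < e)
    (hbreak : q[e]? ≠ q[e + d]?) (hn : e + d < q.length) :
    CondB q := by
  classical
  by_cases hrep : ∃ c, (e + d ≤ c ∧ c < q.length) ∧ ∃ b < c, q[b]? = q[c]?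
  · obtain ⟨c, ⟨⟨hedc, hcn⟩, b₀, hb₀c, hb₀⟩, hmin⟩ := Nat.exists_least hrep
    obtain ⟨b, hbc, hb, hlast⟩ : ∃ b < c, q[b]? = q[c]? ∧ ∀ x, b < x → x < c → q[x]? ≠ q[c]? :=
      ⟨Nat.findGreatest (fun b => q[b]? = q[c]?) (c - 1),
        by have := Nat.findGreatest_le (P := fun b => q[b]? = q[c]?) (c - 1); omega,
        Nat.findGreatest_spec (P := fun b => q[b]? = q[c]?) (n := c - 1) (by omega) hb₀,
        fun x hbx hxc => Nat.findGreatest_is_greatest hbx (by omega)⟩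
    exact hC3.condB_of_fresh_repeat hd hdist hpre he hbreak hedc hcn
      (fun x y hxy hy hyc heq => hmin y hyc ⟨⟨hy, by omega⟩, x, hxy, heq⟩) hbc hb hlast
  · push Not at hrep
    -- all letters from `e` on are distinct: let `v` be the last letter of `q`
    refine .inl (condB2a_of_periodicOn_of_periodicOn (m := q.length - 1) hd one_pos hpre
      (by omega) (by omega) (fun t ht htn => absurd htn (by omega))
      ((nodup_extract_iff (by omega)).2 fun x y _ hxy hy => ?_))
    rcases lt_or_ge y (e + d) with hyed | hyed
    · exact getElem?_ne_of_lt_period hd hdist hpre hxy (by omega) hyed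
    · exact hrep y ⟨hyed, by omega⟩ x hxy

theorem CondC3.condB_of_head_repeat (hC3 : CondC3 q) (hd : 0 < d) (hdn : d < q.length)
    (hdist : ∀ x y, x < y → y < d → q[x]? ≠ q[y]?) (h0 : q[0]? = q[d]?) :
    CondB q := by
  by_cases hper : q.PeriodicOn d 0 q.length
  · exact .inl (condB2a_of_periodicOn hd (by omega) hper
      ((nodup_extract_iff (by omega)).2 fun x y _ hxy hy => hdist x y hxy (by omega)))
  have hex : ∃ e, e + d < q.length ∧ q[e]? ≠ q[e + d]? := by
    simp only [PeriodicOn, not_forall] at hper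
    obtain ⟨t, -, ht, hne⟩ := hper
    exact ⟨t, ht, hne⟩
  obtain ⟨e, ⟨hn, hbreak⟩, hmin⟩ := Nat.exists_least hex
  have hpre : q.PeriodicOn d 0 (e + d) := fun t _ ht => by
    by_contra hne
    exact hmin t (by omega) ⟨by omega, hne⟩
  have he : 0 < e := Nat.pos_of_ne_zero fun he => hbreak (by rw [he, Nat.zero_add]; exact h0)
  exact hC3.condB_of_break hd hdist hpre he hbreak hn

theorem CondC3.condB (hC3 : CondC3 q) : CondB q := by
  by_cases hrep : ∃ j, j < q.length ∧ ∃ i < j, q[i]? = q[j]?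
  · obtain ⟨j, ⟨hj, i, hij, heq⟩, hmin⟩ := Nat.exists_least hrep
    have hdist : ∀ x y, x < y → y < j → q[x]? ≠ q[y]? :=
      fun x y hxy hyj heq' => hmin y hyj ⟨by omega, x, hxy, heq'⟩
    obtain ⟨o, ho, hl, hr⟩ := condC3_iff_periodicOn.1 hC3 i j hij hj heq
    rcases Nat.eq_zero_or_pos o with rfl | ho0
    · refine .inl (condB2a_of_periodicOn (a := i) (p := j - i) (by omega) (by omega)
        (fun t hit ht => ?_)
        ((nodup_extract_iff (by omega)).2 fun x y _ hxy hy => hdist x y hxy (by omega)))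
      rcases hit.eq_or_lt with rfl | hit
      · rwa [Nat.add_sub_cancel' hij.le]
      · simpa using hr t hit (by simpa using ht)
    -- `q[0] = q[o]` with `0 < o ≤ j` forces `o = j`, hence `i = 0`
    have hoj : ¬ o < j := fun hoj => hdist 0 o ho0 hoj (by simpa using hl 0 le_rfl (by omega))
    obtain rfl : i = 0 := by omega
    exact hC3.condB_of_head_repeat hij hj hdist heq
  · push Not at hrep
    refine .inl ⟨0, 0, [], [], q, ?_, by simp [wpow]⟩
    simpa using nodup_iff_getElem?_ne_getElem?.2 fun i j hij hj => hrep j hj i hij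

end Forward

end

theorem stmt_8 {α : Type*} (q : List α) :
    (CondC3 q → CondB2a q ∨ CondB2b q ∨ CondB3 q) ∧
    (CondB2a q → CondC3 q) ∧ (CondB2b q → CondC3 q) ∧ (CondB3 q → CondC3 q) := by
  exact ⟨CondC3.condB, CondB2a.condC3, CondB2b.condC3, CondB3.condC3⟩
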